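/- Let T > 0, D_A, D_B, D_C > 0, γ ≥ 0, and let f_A, f_B : ℝ × [0, T] → ℝ be bounded measurable functions with M_0 := max(T · sup|f_A|, T · sup|f_B|) > 0. Let (A_i), (B_i), (C_i) (i ≥ 0) be bounded measurable functions ℝ × [0, T] → ℝ satisfying: A_0(x,t) = ∫_0^t ∫_ℝ φ_{D_A}(x−y, t−s) f_A(y, s) dy ds, B_0(x,t) = ∫_0^t ∫_ℝ φ_{D_B}(x−y, t−s) f_B(y, s) dy ds, C_0 = 0, and for every i ≥ 1: A_i(x,t) = −∫_0^t ∫_ℝ φ_{D_A}(x−y, t−s) [ Σ_{j=0}^{i−1} A_j(y,s) B_{i−1−j}(y,s) − γ C_{i−1}(y,s) ] dy ds, B_i(x,t) = −∫_0^t ∫_ℝ φ_{D_B}(x−y, t−s) [ Σ_{j=0}^{i−1} A_j(y,s) B_{i−1−j}(y,s) − γ C_{i−1}(y,s) ] dy ds, and C_i(x,t) = ∫_0^t ∫_ℝ φ_{D_C}(x−y, t−s) [ Σ_{j=0}^{i−1} A_j(y,s) B_{i−1−j}(y,s) − γ C_{i−1}(y,s) ] dy ds. Then for every real λ with 0 <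 λ < 1/(T(12 M_0 + 10 γ)) and every i ≥ 0: λ^i sup_{x, t ∈ [0,T]} |A_i(x,t)| ≤ M_0 / 2^i, λ^i sup |B_i(x,t)| ≤ M_0 / 2^i, and λ^i sup |C_i(x,t)| ≤ M_0 / 2^i. -/

import Mathlib

/-!
The heat kernel is a probability density in space, so Duhamel's formula turns a source bounded
by `K` on `ℝ × [0, T]` into a solution bounded by `T * K`. Hence the suprema `a i, b i, c i` of
`|A i|, |B i|, |C i|` all obey `u (m + 1) ≤ T (∑_{j ≤ m} a j b (m - j) + γ c m)`, the
recursion of the Catalan numbers, and so `u n ≤ M₀ Cₙ (T (M₀ + γ))ⁿ` for `u = a, b, c` by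
induction. Since `Cₙ ≤ 4ⁿ`, the bound `λ T (12 M₀ + 10 γ) < 1` makes `λⁿ u n ≤ M₀ / 2ⁿ`.
-/

open MeasureTheory

/-- The one-dimensional heat kernel `φ_D(x,t) = (4πDt)^{-1/2} exp(−x²/(4Dt))`. -/
noncomputable def heatKernel (D x t : ℝ) : ℝ :=
  (4 * Real.pi * D * t) ^ (-(1 : ℝ) / 2) * Real.exp (-(x ^ 2) / (4 * D * t))

open Finset

lemma catalan_le_four_pow (n : ℕ) : catalan n ≤ 4 ^ n :=
  calc catalan n ≤ (n + 1) * catalan n := Nat.le_mul_of_pos_left _ n.succ_pos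
    _ = n.centralBinom := succ_mul_catalan_eq_centralBinom n
    _ ≤ 4 ^ n := Nat.centralBinom_le_four_pow n

lemma catalan_succ_eq_sum_range (m : ℕ) :
    catalan (m + 1) = ∑ j ∈ range (m + 1), catalan j * catalan (m - j) := by
  rw [catalan_succ, ← sum_range (fun j => catalan j * catalan (m - j))]

lemma catalan_le_catalan_succ (m : ℕ) : catalan m ≤ catalan (m + 1) := by
  rw [catalan_succ_eq_sum_range]
  simpa using single_le_sum (f := fun j => catalan j * catalan (m - j))
    (fun j _ => Nat.zero_le _) (mem_range.mpr m.succ_pos)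

lemma le_catalan_mul_pow_of_le_convolution {a b c : ℕ → ℝ} {M T γ : ℝ}
    (hM : 0 ≤ M) (hT : 0 ≤ T) (hγ : 0 ≤ γ) (hb : ∀ n, 0 ≤ b n)
    (h₀ : ∀ u ∈ ({a, b, c} : Set (ℕ → ℝ)), u 0 ≤ M)
    (hsucc : ∀ m, ∀ u ∈ ({a, b, c} : Set (ℕ → ℝ)),
      u (m + 1) ≤ T * (∑ j ∈ range (m + 1), a j * b (m - j) + γ * c m)) (n : ℕ) :
    ∀ u ∈ ({a, b, c} : Set (ℕ → ℝ)), u n ≤ M * catalan n * (T * (M + γ)) ^ n := by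
  set r := T * (M + γ)
  have hr : 0 ≤ r := by positivity
  induction n using Nat.strong_induction_on with
  | _ n ih =>
  intro u hu
  cases n with
  | zero => simpa using h₀ u hu
  | succ m =>
    have hconv : ∑ j ∈ range (m + 1), a j * b (m - j) ≤ M ^ 2 * catalan (m + 1) * r ^ m := by
      calc ∑ j ∈ range (m + 1), a j * b (m - j)
          ≤ ∑ j ∈ range (m + 1), (M * catalan j * r ^ j) * (M * catalan (m - j) * r ^ (m - j)) :=
            sum_le_sum fun j hj => mul_le_mul (ih j (by simp at hj; omega) a (by simp))
              (ih (m - j) (by omega) b (by simp)) (hb _) (by positivity)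
        _ = M ^ 2 * catalan (m + 1) * r ^ m := by
            rw [catalan_succ_eq_sum_range, Nat.cast_sum, mul_sum, sum_mul]
            refine sum_congr rfl fun j hj => ?_
            rw [← pow_mul_pow_sub r (Nat.lt_succ_iff.mp (mem_range.mp hj))]
            push_cast
            ring
    have hc : c m ≤ M * catalan (m + 1) * r ^ m := by
      refine (ih m m.lt_succ_self c (by simp)).trans ?_
      gcongr
      exact_mod_cast catalan_le_catalan_succ m
    calc u (m + 1) ≤ T * (∑ j ∈ range (m + 1), a j * b (m - j) + γ * c m) := hsucc m u hu
      _ ≤ T * (M ^ 2 * catalan (m + 1) * r ^ m + γ * (M * catalan (m + 1) * r ^ m)) := by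
          gcongr
      _ = M * catalan (m + 1) * r ^ (m + 1) := by ring

lemma pow_mul_le_div_two_pow_of_le_catalan {M r lam x : ℝ} {n : ℕ} (hM : 0 ≤ M) (hr : 0 ≤ r)
    (hlam : 0 ≤ lam) (hsmall : 8 * (lam * r) ≤ 1) (hx : x ≤ M * catalan n * r ^ n) :
    lam ^ n * x ≤ M / 2 ^ n := by
  have hcat : (catalan n : ℝ) ≤ 4 ^ n := by exact_mod_cast catalan_le_four_pow n
  calc lam ^ n * x ≤ lam ^ n * (M * catalan n * r ^ n) := by gcongr
    _ = M * catalan n * (lam * r) ^ n := by ring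
    _ ≤ M * 4 ^ n * (lam * r) ^ n := by gcongr
    _ = M * (4 * (lam * r)) ^ n := by ring
    _ ≤ M * (1 / 2) ^ n := by gcongr; linarith [mul_nonneg hlam hr]
    _ = M / 2 ^ n := by rw [div_pow, one_pow, mul_one_div]

lemma heatKernel_time_zero (D x : ℝ) : heatKernel D x 0 = 0 := by
  simp [heatKernel, Real.zero_rpow (by norm_num : -(1 : ℝ) / 2 ≠ 0)]

lemma heatKernel_nonneg {D t : ℝ} (hD : 0 ≤ D) (ht : 0 ≤ t) (x : ℝ) : 0 ≤ heatKernel D x t :=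
  mul_nonneg (Real.rpow_nonneg (by positivity) _) (Real.exp_nonneg _)

lemma heatKernel_eq_gaussian (D x t : ℝ) :
    heatKernel D x t =
      (4 * Real.pi * D * t) ^ (-(1 : ℝ) / 2) * Real.exp (-(4 * D * t)⁻¹ * x ^ 2) := by
  unfold heatKernel
  ring_nf

lemma integrable_heatKernel {D t : ℝ} (hD : 0 < D) (ht : 0 < t) :
    Integrable (fun x => heatKernel D x t) := by
  simp_rw [heatKernel_eq_gaussian]
  exact (integrable_exp_neg_mul_sq (by positivity)).const_mul _

lemma integral_heatKernel {D t : ℝ} (hD : 0 < D) (ht : 0 < t) :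
    ∫ x, heatKernel D x t = 1 := by
  simp_rw [heatKernel_eq_gaussian]
  rw [integral_const_mul, integral_gaussian, div_inv_eq_mul, Real.sqrt_eq_rpow,
    show -(1 : ℝ) / 2 = -(1 / 2) by norm_num, Real.rpow_neg (by positivity),
    show Real.pi * (4 * D * t) = 4 * Real.pi * D * t by ring]
  exact inv_mul_cancel₀ (by positivity)

/-- Duhamel's formula: the solution of `∂ₜu = D ∂ₓ²u + g` on `ℝ × [0, ∞)` with `u(·, 0) = 0`. -/
noncomputable def heatDuhamel (D : ℝ) (g : ℝ → ℝ → ℝ) (x t : ℝ) : ℝ :=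
  ∫ s in (0 : ℝ)..t, ∫ y, heatKernel D (x - y) (t - s) * g y s

lemma abs_integral_heatKernel_mul_le {D τ K : ℝ} {g : ℝ → ℝ} (hD : 0 < D) (hτ : 0 ≤ τ)
    (hg : ∀ y, |g y| ≤ K) (x : ℝ) :
    |∫ y, heatKernel D (x - y) τ * g y| ≤ K := by
  rcases hτ.eq_or_lt with rfl | hτ
  -- the kernel vanishes at `τ = 0`, since `0 ^ (-1/2) = 0` for `Real.rpow`
  · simpa [heatKernel_time_zero] using (abs_nonneg _).trans (hg 0)
  have hdom : ∀ y, ‖heatKernel D (x - y) τ * g y‖ ≤ K * heatKernel D (x - y) τ := fun y => by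
    rw [Real.norm_eq_abs, abs_mul, abs_of_nonneg (heatKernel_nonneg hD.le hτ.le _), mul_comm]
    exact mul_le_mul_of_nonneg_right (hg y) (heatKernel_nonneg hD.le hτ.le _)
  calc |∫ y, heatKernel D (x - y) τ * g y|
      ≤ ∫ y, K * heatKernel D (x - y) τ :=
        norm_integral_le_of_norm_le (((integrable_heatKernel hD hτ).comp_sub_left x).const_mul K)
          (Filter.Eventually.of_forall hdom)
    _ = K := by
        rw [integral_const_mul, integral_sub_left_eq_self (fun y => heatKernel D y τ),
          integral_heatKernel hD hτ, mul_one]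

lemma abs_heatDuhamel_le {D T K t : ℝ} {g : ℝ → ℝ → ℝ} (hD : 0 < D)
    (hg : ∀ y, ∀ s ∈ Set.Icc 0 T, |g y s| ≤ K) (ht : t ∈ Set.Icc 0 T) (x : ℝ) :
    |heatDuhamel D g x t| ≤ T * K := by
  have hK : 0 ≤ K := (abs_nonneg _).trans (hg 0 t ht)
  have hinner : ∀ s ∈ Set.uIoc 0 t, ‖∫ y, heatKernel D (x - y) (t - s) * g y s‖ ≤ K := by
    intro s hs
    rw [Set.uIoc_of_le ht.1] at hs
    exact abs_integral_heatKernel_mul_le hD (sub_nonneg.mpr hs.2)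
      (fun y => hg y s ⟨hs.1.le, hs.2.trans ht.2⟩) x
  calc |heatDuhamel D g x t| ≤ K * |t - 0| :=
        intervalIntegral.norm_integral_le_of_norm_le_const hinner
    _ ≤ T * K := by rw [sub_zero, abs_of_nonneg ht.1, mul_comm]; gcongr; exact ht.2

noncomputable def stripSup (T : ℝ) (F : ℝ → ℝ → ℝ) : ℝ :=
  ⨆ p : ℝ × Set.Icc (0 : ℝ) T, |F p.1 p.2|

section stripSup

variable {T K : ℝ} {F : ℝ → ℝ → ℝ}

lemma stripSup_nonneg : 0 ≤ stripSup T F :=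
  Real.iSup_nonneg fun _ => abs_nonneg _

lemma abs_le_stripSup (hF : ∃ K, ∀ x, ∀ t ∈ Set.Icc 0 T, |F x t| ≤ K) {x t : ℝ}
    (ht : t ∈ Set.Icc 0 T) : |F x t| ≤ stripSup T F := by
  obtain ⟨K, hK⟩ := hF
  exact le_ciSup (f := fun p : ℝ × Set.Icc (0 : ℝ) T => |F p.1 p.2|)
    ⟨K, by rintro _ ⟨p, rfl⟩; exact hK p.1 p.2 p.2.2⟩ ⟨x, t, ht⟩

lemma stripSup_le (hK : 0 ≤ K) (hF : ∀ x, ∀ t ∈ Set.Icc 0 T, |F x t| ≤ K) : stripSup T F ≤ K :=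
  Real.iSup_le (fun p => hF p.1 p.2 p.2.2) hK

lemma stripSup_le_of_abs_le_heatDuhamel {D : ℝ} {g : ℝ → ℝ → ℝ} (hD : 0 < D) (hT : 0 ≤ T)
    (hg : ∀ y, ∀ s ∈ Set.Icc 0 T, |g y s| ≤ K)
    (hF : ∀ x, ∀ t ∈ Set.Icc 0 T, |F x t| ≤ |heatDuhamel D g x t|) :
    stripSup T F ≤ T * K :=
  stripSup_le (mul_nonneg hT ((abs_nonneg _).trans (hg 0 0 ⟨le_rfl, hT⟩)))
    fun x t ht => (hF x t ht).trans (abs_heatDuhamel_le hD hg ht x)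

end stripSup

/-- The source of the order-`i` terms: the coefficient of `λ ^ (i - 1)` in `[A][B] - γ[C]`. -/
def reactionSource (γ : ℝ) (A B C : ℕ → ℝ → ℝ → ℝ) (i : ℕ) (y s : ℝ) : ℝ :=
  (∑ j ∈ range i, A j y s * B (i - 1 - j) y s) - γ * C (i - 1) y s

lemma abs_reactionSource_succ_le {T γ : ℝ} (hγ : 0 ≤ γ) {A B C : ℕ → ℝ → ℝ → ℝ}
    (hA : ∀ i, ∃ K, ∀ x, ∀ t ∈ Set.Icc 0 T, |A i x t| ≤ K)
    (hB : ∀ i, ∃ K, ∀ x, ∀ t ∈ Set.Icc 0 T, |B i x t| ≤ K)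
    (hC : ∀ i, ∃ K, ∀ x, ∀ t ∈ Set.Icc 0 T, |C i x t| ≤ K)
    (m : ℕ) (y : ℝ) {s : ℝ} (hs : s ∈ Set.Icc 0 T) :
    |reactionSource γ A B C (m + 1) y s| ≤
      ∑ j ∈ range (m + 1), stripSup T (A j) * stripSup T (B (m - j)) + γ * stripSup T (C m) := by
  rw [reactionSource, Nat.add_sub_cancel]
  refine (abs_sub _ _).trans (add_le_add ?_ ?_)
  · refine (abs_sum_le_sum_abs _ _).trans (sum_le_sum fun j _ => ?_)
    rw [abs_mul]
    exact mul_le_mul (abs_le_stripSup (hA j) hs) (abs_le_stripSup (hB _) hs)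
      (abs_nonneg _) stripSup_nonneg
  · rw [abs_mul, abs_of_nonneg hγ]
    exact mul_le_mul_of_nonneg_left (abs_le_stripSup (hC m) hs) hγ

theorem perturbation_terms_geometric_bound_general
    (T DA DB DC γ : ℝ) (hT : 0 < T) (hDA : 0 < DA) (hDB : 0 < DB) (hDC : 0 < DC)
    (hγ : 0 ≤ γ)
    (fA fB : ℝ → ℝ → ℝ)
    (hfAb : ∃ K, ∀ x : ℝ, ∀ t ∈ Set.Icc (0 : ℝ) T, |fA x t| ≤ K)
    (hfBb : ∃ K, ∀ x : ℝ, ∀ t ∈ Set.Icc (0 : ℝ) T, |fB x t| ≤ K)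
    (M₀ : ℝ)
    (hM₀ : M₀ = max (T * ⨆ p : ℝ × Set.Icc (0 : ℝ) T, |fA p.1 p.2|)
                    (T * ⨆ p : ℝ × Set.Icc (0 : ℝ) T, |fB p.1 p.2|))
    (A B C : ℕ → ℝ → ℝ → ℝ)
    (hAb : ∀ i, ∃ K, ∀ x : ℝ, ∀ t ∈ Set.Icc (0 : ℝ) T, |A i x t| ≤ K)
    (hBb : ∀ i, ∃ K, ∀ x : ℝ, ∀ t ∈ Set.Icc (0 : ℝ) T, |B i x t| ≤ K)
    (hCb : ∀ i, ∃ K, ∀ x : ℝ, ∀ t ∈ Set.Icc (0 : ℝ) T, |C i x t| ≤ K)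
    (hA0 : ∀ x : ℝ, ∀ t ∈ Set.Icc (0 : ℝ) T,
      A 0 x t = ∫ s in (0 : ℝ)..t, ∫ y : ℝ, heatKernel DA (x - y) (t - s) * fA y s)
    (hB0 : ∀ x : ℝ, ∀ t ∈ Set.Icc (0 : ℝ) T,
      B 0 x t = ∫ s in (0 : ℝ)..t, ∫ y : ℝ, heatKernel DB (x - y) (t - s) * fB y s)
    (hC0 : ∀ x : ℝ, ∀ t ∈ Set.Icc (0 : ℝ) T, C 0 x t = 0)
    (hArec : ∀ i : ℕ, 1 ≤ i → ∀ x : ℝ, ∀ t ∈ Set.Icc (0 : ℝ) T,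
      A i x t = -∫ s in (0 : ℝ)..t, ∫ y : ℝ, heatKernel DA (x - y) (t - s) *
        ((∑ j ∈ Finset.range i, A j y s * B (i - 1 - j) y s) - γ * C (i - 1) y s))
    (hBrec : ∀ i : ℕ, 1 ≤ i → ∀ x : ℝ, ∀ t ∈ Set.Icc (0 : ℝ) T,
      B i x t = -∫ s in (0 : ℝ)..t, ∫ y : ℝ, heatKernel DB (x - y) (t - s) *
        ((∑ j ∈ Finset.range i, A j y s * B (i - 1 - j) y s) - γ * C (i - 1) y s))
    (hCrec : ∀ i : ℕ, 1 ≤ i → ∀ x : ℝ, ∀ t ∈ Set.Icc (0 : ℝ) T,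
      C i x t = ∫ s in (0 : ℝ)..t, ∫ y : ℝ, heatKernel DC (x - y) (t - s) *
        ((∑ j ∈ Finset.range i, A j y s * B (i - 1 - j) y s) - γ * C (i - 1) y s)) :
    ∀ lam : ℝ, 0 < lam → lam < 1 / (T * (12 * M₀ + 10 * γ)) →
      ∀ i : ℕ,
        lam ^ i * (⨆ p : ℝ × Set.Icc (0 : ℝ) T, |A i p.1 p.2|) ≤ M₀ / 2 ^ i ∧
        lam ^ i * (⨆ p : ℝ × Set.Icc (0 : ℝ) T, |B i p.1 p.2|) ≤ M₀ / 2 ^ i ∧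
        lam ^ i * (⨆ p : ℝ × Set.Icc (0 : ℝ) T, |C i p.1 p.2|) ≤ M₀ / 2 ^ i := by
  intro lam hlam hlam' i
  have hM : 0 ≤ M₀ := hM₀ ▸ le_max_of_le_left (mul_nonneg hT.le stripSup_nonneg)
  have hsmall : 8 * (lam * (T * (M₀ + γ))) ≤ 1 := by
    have hX : 0 < T * (12 * M₀ + 10 * γ) := one_div_pos.mp (hlam.trans hlam')
    have := (lt_div_iff₀ hX).mp hlam'
    nlinarith [mul_nonneg (mul_nonneg hlam.le hT.le) hM, mul_nonneg (mul_nonneg hlam.le hT.le) hγ]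
  have hsource m := abs_reactionSource_succ_le hγ hAb hBb hCb m
  have hbase : ∀ u ∈ ({fun i => stripSup T (A i), fun i => stripSup T (B i),
      fun i => stripSup T (C i)} : Set (ℕ → ℝ)), u 0 ≤ M₀ := by
    rintro u (rfl | rfl | rfl)
    · exact (stripSup_le_of_abs_le_heatDuhamel hDA hT.le (fun y s hs => abs_le_stripSup hfAb hs)
        fun x t ht => (congrArg abs (hA0 x t ht)).le).trans (hM₀ ▸ le_max_left _ _)
    · exact (stripSup_le_of_abs_le_heatDuhamel hDB hT.le (fun y s hs => abs_le_stripSup hfBb hs)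
        fun x t ht => (congrArg abs (hB0 x t ht)).le).trans (hM₀ ▸ le_max_right _ _)
    · exact stripSup_le hM fun x t ht => by rw [hC0 x t ht, abs_zero]; exact hM
  have hstep : ∀ m, ∀ u ∈ ({fun i => stripSup T (A i), fun i => stripSup T (B i),
      fun i => stripSup T (C i)} : Set (ℕ → ℝ)), u (m + 1) ≤ T *
        (∑ j ∈ range (m + 1), stripSup T (A j) * stripSup T (B (m - j)) + γ * stripSup T (C m)) := by
    rintro m u (rfl | rfl | rfl)
    · exact stripSup_le_of_abs_le_heatDuhamel hDA hT.le (hsource m) fun x t ht => by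
        rw [hArec _ m.succ_pos x t ht, abs_neg]; rfl
    · exact stripSup_le_of_abs_le_heatDuhamel hDB hT.le (hsource m) fun x t ht => by
        rw [hBrec _ m.succ_pos x t ht, abs_neg]; rfl
    · exact stripSup_le_of_abs_le_heatDuhamel hDC hT.le (hsource m) fun x t ht => by
        rw [hCrec _ m.succ_pos x t ht]; rfl
  have hbound (u : ℕ → ℝ) hu : lam ^ i * u i ≤ M₀ / 2 ^ i :=
    pow_mul_le_div_two_pow_of_le_catalan hM (by positivity) hlam.le hsmall
      (le_catalan_mul_pow_of_le_convolution hM hT.le hγ (fun _ => stripSup_nonneg) hbase hstep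
        i u hu)
  exact ⟨hbound _ (Or.inl rfl), hbound _ (Or.inr (Or.inl rfl)), hbound _ (Or.inr (Or.inr rfl))⟩

/-- Geometric bounds on the perturbation terms of the reaction–diffusion system
`A + B ⇌ C`: if `A_i, B_i, C_i` are the terms of the perturbation series (given by the
heat-kernel convolution recursion via Duhamel's formula) and
`M₀ = max(T·sup|f_A|, T·sup|f_B|) > 0`, then for all `0 < λ < 1/(T(12M₀ + 10γ))` and all
`i`, `λ^i sup|A_i| ≤ M₀/2^i`, `λ^i sup|B_i| ≤ M₀/2^i`, and `λ^i sup|C_i| ≤ M₀/2^i`,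
where the suprema are over `ℝ × [0,T]`. -/
theorem perturbation_terms_geometric_bound
    (T DA DB DC γ : ℝ) (hT : 0 < T) (hDA : 0 < DA) (hDB : 0 < DB) (hDC : 0 < DC)
    (hγ : 0 ≤ γ)
    (fA fB : ℝ → ℝ → ℝ)
    (hfAm : Measurable (Function.uncurry fA)) (hfBm : Measurable (Function.uncurry fB))
    (hfAb : ∃ K, ∀ x : ℝ, ∀ t ∈ Set.Icc (0 : ℝ) T, |fA x t| ≤ K)
    (hfBb : ∃ K, ∀ x : ℝ, ∀ t ∈ Set.Icc (0 : ℝ) T, |fB x t| ≤ K)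
    (M₀ : ℝ)
    (hM₀ : M₀ = max (T * ⨆ p : ℝ × Set.Icc (0 : ℝ) T, |fA p.1 p.2|)
                    (T * ⨆ p : ℝ × Set.Icc (0 : ℝ) T, |fB p.1 p.2|))
    (hM₀pos : 0 < M₀)
    (A B C : ℕ → ℝ → ℝ → ℝ)
    (hAm : ∀ i, Measurable (Function.uncurry (A i)))
    (hBm : ∀ i, Measurable (Function.uncurry (B i)))
    (hCm : ∀ i, Measurable (Function.uncurry (C i)))
    (hAb : ∀ i, ∃ K, ∀ x : ℝ, ∀ t ∈ Set.Icc (0 : ℝ) T, |A i x t| ≤ K)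
    (hBb : ∀ i, ∃ K, ∀ x : ℝ, ∀ t ∈ Set.Icc (0 : ℝ) T, |B i x t| ≤ K)
    (hCb : ∀ i, ∃ K, ∀ x : ℝ, ∀ t ∈ Set.Icc (0 : ℝ) T, |C i x t| ≤ K)
    (hA0 : ∀ x : ℝ, ∀ t ∈ Set.Icc (0 : ℝ) T,
      A 0 x t = ∫ s in (0 : ℝ)..t, ∫ y : ℝ, heatKernel DA (x - y) (t - s) * fA y s)
    (hB0 : ∀ x : ℝ, ∀ t ∈ Set.Icc (0 : ℝ) T,
      B 0 x t = ∫ s in (0 : ℝ)..t, ∫ y : ℝ, heatKernel DB (x - y) (t - s) * fB y s)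
    (hC0 : ∀ x : ℝ, ∀ t ∈ Set.Icc (0 : ℝ) T, C 0 x t = 0)
    (hArec : ∀ i : ℕ, 1 ≤ i → ∀ x : ℝ, ∀ t ∈ Set.Icc (0 : ℝ) T,
      A i x t = -∫ s in (0 : ℝ)..t, ∫ y : ℝ, heatKernel DA (x - y) (t - s) *
        ((∑ j ∈ Finset.range i, A j y s * B (i - 1 - j) y s) - γ * C (i - 1) y s))
    (hBrec : ∀ i : ℕ, 1 ≤ i → ∀ x : ℝ, ∀ t ∈ Set.Icc (0 : ℝ) T,
      B i x t = -∫ s in (0 : ℝ)..t, ∫ y : ℝ, heatKernel DB (x - y) (t - s) *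
        ((∑ j ∈ Finset.range i, A j y s * B (i - 1 - j) y s) - γ * C (i - 1) y s))
    (hCrec : ∀ i : ℕ, 1 ≤ i → ∀ x : ℝ, ∀ t ∈ Set.Icc (0 : ℝ) T,
      C i x t = ∫ s in (0 : ℝ)..t, ∫ y : ℝ, heatKernel DC (x - y) (t - s) *
        ((∑ j ∈ Finset.range i, A j y s * B (i - 1 - j) y s) - γ * C (i - 1) y s)) :
    ∀ lam : ℝ, 0 < lam → lam < 1 / (T * (12 * M₀ + 10 * γ)) →
      ∀ i : ℕ,
        lam ^ i * (⨆ p : ℝ × Set.Icc (0 : ℝ) T, |A i p.1 p.2|) ≤ M₀ / 2 ^ i ∧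
        lam ^ i * (⨆ p : ℝ × Set.Icc (0 : ℝ) T, |B i p.1 p.2|) ≤ M₀ / 2 ^ i ∧
        lam ^ i * (⨆ p : ℝ × Set.Icc (0 : ℝ) T, |C i p.1 p.2|) ≤ M₀ / 2 ^ i :=
  perturbation_terms_geometric_bound_general T DA DB DC γ hT hDA hDB hDC hγ fA fB hfAb hfBb M₀ hM₀ A
    B C hAb hBb hCb hA0 hB0 hC0 hArec hBrec hCrec
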